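/- The IPCW estimators of the survival and distribution functions are complementary exactly when all last observations are failures: S̃_IPCW(t) = 1 − F̂_IPCW(t) holds for every t ≥ 0 if and only if ΔN(τ) = Y(τ). -/

import Mathlib

/-!
Adding the two estimators removes the indicator in `t`: `S̃(t) + F̂(t) = n⁻¹ ∑ᵢ Dᵢ / K̂(Xᵢ−)`.
Writing `Ŝ` for the Kaplan–Meier estimator of survival, the identity `K̂(u−) Ŝ(u−) = Y(u)/n`
shows that the mass `n⁻¹ ΔN(u) / K̂(u−)` put at `u` is the Kaplan–Meier jump `Ŝ(u−) − Ŝ(u)`,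
so the total mass telescopes to `1 − Ŝ(τ)`. The estimators are therefore complementary iff
`Ŝ(τ) = (1 − ΔN(τ)/Y(τ)) Ŝ(τ−)` vanishes, and `Ŝ(τ−) ≠ 0` by the same identity.
-/

open Finset
open scoped Classical

noncomputable section

namespace SurvStmt

/-- The finite set of distinct observed times `{X_1, …, X_n}`. -/
def times {n : ℕ} (X : Fin n → ℝ) : Finset ℝ := Finset.image X Finset.univ

/-- `Y(t) = #{i : X_i ≥ t}`, as a real number. -/
def Yat {n : ℕ} (X : Fin n → ℝ) (t : ℝ) : ℝ :=
  ((Finset.univ.filter (fun i => t ≤ X i)).card : ℝ)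

/-- `Y(t+) = #{i : X_i > t}`, as a real number. -/
def Yplus {n : ℕ} (X : Fin n → ℝ) (t : ℝ) : ℝ :=
  ((Finset.univ.filter (fun i => t < X i)).card : ℝ)

/-- `ΔN(t) = #{i : X_i = t, D_i = 1}`, as a real number. -/
def dN {n : ℕ} (X : Fin n → ℝ) (D : Fin n → Bool) (t : ℝ) : ℝ :=
  ((Finset.univ.filter (fun i => X i = t ∧ D i = true)).card : ℝ)

/-- `ΔC(t) = #{i : X_i = t, D_i = 0}`, as a real number. -/
def dC {n : ℕ} (X : Fin n → ℝ) (D : Fin n → Bool) (t : ℝ) : ℝ :=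
  ((Finset.univ.filter (fun i => X i = t ∧ D i = false)).card : ℝ)

/-- `Y†(t) = Y(t) − ΔN(t)`. -/
def Ydag {n : ℕ} (X : Fin n → ℝ) (D : Fin n → Bool) (t : ℝ) : ℝ :=
  Yat X t - dN X D t

/-- `τ = max_i X_i`, the largest observation time (0 if there is no data). -/
def tau {n : ℕ} (X : Fin n → ℝ) : ℝ := ((times X).max).unbotD 0

/-- Censoring product-limit estimator `K̂(t) = ∏_{u ≤ t} (1 − ΔC(u)/Y†(u))`. -/
def Khat {n : ℕ} (X : Fin n → ℝ) (D : Fin n → Bool) (t : ℝ) : ℝ :=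
  ∏ u ∈ (times X).filter (fun u => u ≤ t), (1 - dC X D u / Ydag X D u)

/-- Left limit `K̂(t−) = ∏_{u < t} (1 − ΔC(u)/Y†(u))`. -/
def Kminus {n : ℕ} (X : Fin n → ℝ) (D : Fin n → Bool) (t : ℝ) : ℝ :=
  ∏ u ∈ (times X).filter (fun u => u < t), (1 - dC X D u / Ydag X D u)

/-- Failure product-limit estimator `Ŝ_PL(t) = ∏_{u ≤ t} (1 − ΔN(u)/Y(u))`. -/
def SPL {n : ℕ} (X : Fin n → ℝ) (D : Fin n → Bool) (t : ℝ) : ℝ :=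
  ∏ u ∈ (times X).filter (fun u => u ≤ t), (1 - dN X D u / Yat X u)

/-- Left limit `Ŝ_PL(t−) = ∏_{u < t} (1 − ΔN(u)/Y(u))`. -/
def SPLminus {n : ℕ} (X : Fin n → ℝ) (D : Fin n → Bool) (t : ℝ) : ℝ :=
  ∏ u ∈ (times X).filter (fun u => u < t), (1 - dN X D u / Yat X u)

/-- IPCW estimator `F̂_IPCW(t) = (1/n) ∑_i D_i 1{X_i ≤ t} / K̂(X_i−)`. -/
def FIPCW {n : ℕ} (X : Fin n → ℝ) (D : Fin n → Bool) (t : ℝ) : ℝ :=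
  (1 / (n : ℝ)) * ∑ i : Fin n,
    (if D i = true then (1 : ℝ) else 0) * (if X i ≤ t then (1 : ℝ) else 0) / Kminus X D (X i)

/-- IPCW survival estimator `S̃_IPCW(t) = (1/n) ∑_i D_i 1{X_i > t} / K̂(X_i−)`. -/
def SIPCW {n : ℕ} (X : Fin n → ℝ) (D : Fin n → Bool) (t : ℝ) : ℝ :=
  (1 / (n : ℝ)) * ∑ i : Fin n,
    (if D i = true then (1 : ℝ) else 0) * (if t < X i then (1 : ℝ) else 0) / Kminus X D (X i)

/-- RTTR jump weight `J(v) = 1/(n · K̂(v−))`. -/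
def Jw {n : ℕ} (X : Fin n → ℝ) (D : Fin n → Bool) (v : ℝ) : ℝ :=
  1 / ((n : ℝ) * Kminus X D v)

/-- Redistribute-to-the-right estimator
`Ŝ_RTTR(t) = 1 − ∑_{v ≤ t} [J(v) ΔN(v) 1{v < τ} + J(τ) Y(τ) 1{v = τ}]`. -/
def SRTTR {n : ℕ} (X : Fin n → ℝ) (D : Fin n → Bool) (t : ℝ) : ℝ :=
  1 - ∑ v ∈ (times X).filter (fun v => v ≤ t),
      (Jw X D v * dN X D v * (if v < tau X then (1 : ℝ) else 0)
        + Jw X D (tau X) * Yat X (tau X) * (if v = tau X then (1 : ℝ) else 0))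


theorem sum_one_sub_mul_prod_filter_lt {α β : Type*} [LinearOrder α] [CommRing β]
    (T : Finset α) (f : α → β) :
    ∑ u ∈ T, (1 - f u) * ∏ v ∈ T.filter (fun v => v < u), f v = 1 - ∏ v ∈ T, f v := by
  induction T using Finset.induction_on_max with
  | empty => simp
  | insert a s hlt ih =>
    have ha : a ∉ s := fun h => lt_irrefl a (hlt a h)
    have filter_a : (insert a s).filter (fun v => v < a) = s := by
      rw [filter_insert, if_neg (lt_irrefl a)]
      exact filter_true_of_mem hlt
    have filter_s : ∀ u ∈ s, (insert a s).filter (fun v => v < u) = s.filter (fun v => v < u) :=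
      fun u hu => by rw [filter_insert, if_neg (hlt u hu).not_gt]
    rw [sum_insert ha, prod_insert ha, filter_a, sum_congr rfl fun u hu => by rw [filter_s u hu], ih]
    ring

theorem prod_filter_le_eq_mul_prod_filter_lt {α β : Type*} [LinearOrder α] [CommMonoid β]
    {T : Finset α} {u : α} (hu : u ∈ T) (f : α → β) :
    ∏ v ∈ T.filter (fun v => v ≤ u), f v = f u * ∏ v ∈ T.filter (fun v => v < u), f v := by
  have : T.filter (fun v => v ≤ u) = insert u (T.filter (fun v => v < u)) := by
    ext v
    simp only [mem_insert, mem_filter, le_iff_lt_or_eq]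
    constructor
    · rintro ⟨hv, h | rfl⟩ <;> tauto
    · rintro (rfl | ⟨hv, h⟩) <;> tauto
  rw [this, prod_insert (by simp)]

variable {n : ℕ} {X : Fin n → ℝ} {D : Fin n → Bool}

theorem mem_times {v : ℝ} : v ∈ times X ↔ ∃ i, X i = v := by
  simp [times]

theorem times_nonempty (hn : 0 < n) : (times X).Nonempty :=
  ⟨X ⟨0, hn⟩, mem_times.2 ⟨_, rfl⟩⟩

theorem tau_eq_max' (h : (times X).Nonempty) : tau X = (times X).max' h := by
  unfold tau
  rw [← coe_max' h]
  rfl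

theorem tau_mem_times (hn : 0 < n) : tau X ∈ times X :=
  tau_eq_max' (times_nonempty hn) ▸ max'_mem _ _

theorem le_tau (hn : 0 < n) {v : ℝ} (hv : v ∈ times X) : v ≤ tau X :=
  tau_eq_max' (times_nonempty hn) ▸ le_max' _ v hv

theorem Yat_pos {v : ℝ} (hv : v ∈ times X) : 0 < Yat X v := by
  obtain ⟨i, rfl⟩ := mem_times.1 hv
  unfold Yat
  exact_mod_cast card_pos.2 ⟨i, by simp⟩

theorem Yat_eq_Yplus_add_dN_add_dC (D : Fin n → Bool) (v : ℝ) :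
    Yat X v = Yplus X v + dN X D v + dC X D v := by
  have hle : univ.filter (fun i => v ≤ X i)
      = univ.filter (fun i => v < X i) ∪ univ.filter (fun i => X i = v) := by
    ext i
    simp [le_iff_lt_or_eq, eq_comm]
  have hdisj : Disjoint (univ.filter (fun i => v < X i)) (univ.filter (fun i => X i = v)) :=
    disjoint_filter.2 fun i _ h => h.ne'
  have hsplit := card_filter_add_card_filter_not (s := univ.filter (fun i => X i = v))
    (fun i => D i = true)
  simp only [filter_filter, Bool.not_eq_true] at hsplit
  unfold Yat Yplus dN dC
  rw [hle, card_union_of_disjoint hdisj, ← hsplit]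
  push_cast
  ring

theorem Ydag_eq_Yplus_add_dC (v : ℝ) : Ydag X D v = Yplus X v + dC X D v := by
  rw [Ydag, Yat_eq_Yplus_add_dN_add_dC D]
  ring

/-- Holds also when `Y†(v) = 0`, since then `ΔC(v) = Y(v+) = 0`. -/
theorem one_sub_dC_div_Ydag_mul_Ydag (v : ℝ) :
    (1 - dC X D v / Ydag X D v) * Ydag X D v = Yplus X v := by
  have hYplus : 0 ≤ Yplus X v := by unfold Yplus; positivity
  have hdC : 0 ≤ dC X D v := by unfold dC; positivity
  have hdag := Ydag_eq_Yplus_add_dC (X := X) (D := D) v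
  by_cases h : Ydag X D v = 0
  · rw [h, mul_zero]
    linarith
  · field_simp
    linarith

theorem censoring_factor_mul_failure_factor {v : ℝ} (hv : v ∈ times X) :
    (1 - dC X D v / Ydag X D v) * (1 - dN X D v / Yat X v) = Yplus X v / Yat X v := by
  have hY := (Yat_pos hv).ne'
  have hfail : 1 - dN X D v / Yat X v = Ydag X D v / Yat X v := by
    rw [Ydag]
    field_simp
  rw [hfail, ← mul_div_assoc, one_sub_dC_div_Ydag_mul_Ydag]

theorem Yat_eq_of_forall_times_le {u : ℝ} (h : ∀ v ∈ times X, u ≤ v) : Yat X u = n := by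
  simp [Yat, filter_true_of_mem fun i _ => h _ (mem_times.2 ⟨i, rfl⟩)]

theorem Yplus_eq_Yat_of_forall_times_lt_le {a u : ℝ} (hau : a < u)
    (h : ∀ v ∈ times X, v < u → v ≤ a) : Yplus X a = Yat X u := by
  unfold Yplus Yat
  congr 2
  ext i
  simp only [mem_filter, mem_univ, true_and]
  exact ⟨fun hi => not_lt.1 fun hiu => hi.not_ge (h _ (mem_times.2 ⟨i, rfl⟩) hiu),
    hau.trans_le⟩

/-- `Y(v+)` is the number at risk at the next observed time after `v` (or at `u`), so the
product telescopes. -/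
theorem prod_Yplus_div_Yat (hn : 0 < n) (u : ℝ) :
    ∏ v ∈ (times X).filter (fun v => v < u), Yplus X v / Yat X v = Yat X u / n := by
  suffices H : ∀ S : Finset ℝ, ∀ u, S = (times X).filter (fun v => v < u) →
      ∏ v ∈ S, Yplus X v / Yat X v = Yat X u / n from H _ u rfl
  intro S
  induction S using Finset.induction_on_max with
  | empty =>
    intro u hS
    have hn' : (n : ℝ) ≠ 0 := by exact_mod_cast hn.ne'
    have hnone : ∀ v ∈ times X, u ≤ v := fun v hv => not_lt.1 fun hvu =>
      notMem_empty v (hS ▸ mem_filter.2 ⟨hv, hvu⟩)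
    rw [Yat_eq_of_forall_times_le hnone, prod_empty, div_self hn']
  | insert a s hlt ih =>
    intro u hS
    have mem_S {v : ℝ} : v ∈ insert a s ↔ v ∈ times X ∧ v < u := by rw [hS, mem_filter]
    have ha : a ∉ s := fun h => lt_irrefl a (hlt a h)
    obtain ⟨haT, hau⟩ := mem_S.1 (mem_insert_self a s)
    have hbelow : ∀ v ∈ times X, v < u → v ≤ a := fun v hv hvu =>
      (mem_insert.1 (mem_S.2 ⟨hv, hvu⟩)).elim le_of_eq fun h => (hlt v h).le
    have hs : s = (times X).filter (fun v => v < a) := by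
      ext v
      rw [mem_filter]
      refine ⟨fun hv => ⟨(mem_S.1 (mem_insert_of_mem hv)).1, hlt v hv⟩, fun ⟨hvT, hva⟩ => ?_⟩
      exact (mem_insert.1 (mem_S.2 ⟨hvT, hva.trans hau⟩)).resolve_left hva.ne
    have hYa := (Yat_pos haT).ne'
    rw [prod_insert ha, ih a hs, Yplus_eq_Yat_of_forall_times_lt_le hau hbelow]
    field_simp

theorem Kminus_mul_SPLminus (hn : 0 < n) (u : ℝ) :
    Kminus X D u * SPLminus X D u = Yat X u / n := by
  unfold Kminus SPLminus
  rw [← prod_mul_distrib, ← prod_Yplus_div_Yat hn u]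
  exact prod_congr rfl fun v hv => censoring_factor_mul_failure_factor (mem_filter.1 hv).1

theorem Kminus_mul_SPLminus_ne_zero (hn : 0 < n) {u : ℝ} (hu : u ∈ times X) :
    Kminus X D u * SPLminus X D u ≠ 0 := by
  rw [Kminus_mul_SPLminus hn]
  exact div_ne_zero (Yat_pos hu).ne' (by exact_mod_cast hn.ne')

theorem one_div_mul_dN_div_Kminus (hn : 0 < n) {u : ℝ} (hu : u ∈ times X) :
    1 / (n : ℝ) * (dN X D u / Kminus X D u) = dN X D u / Yat X u * SPLminus X D u := by
  have hK := left_ne_zero_of_mul (Kminus_mul_SPLminus_ne_zero (D := D) hn hu)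
  have hY := (Yat_pos hu).ne'
  have hn' : (n : ℝ) ≠ 0 := by exact_mod_cast hn.ne'
  have hnKS : (n : ℝ) * (Kminus X D u * SPLminus X D u) = Yat X u := by
    rw [Kminus_mul_SPLminus hn]
    field_simp
  field_simp
  linear_combination -dN X D u * hnKS

theorem sum_failure_div_eq_sum_dN_div (g : ℝ → ℝ) :
    ∑ i, (if D i = true then (1 : ℝ) else 0) / g (X i) = ∑ u ∈ times X, dN X D u / g u := by
  rw [← sum_fiberwise_of_maps_to (g := X) (t := times X) fun i _ => mem_times.2 ⟨i, rfl⟩]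
  refine sum_congr rfl fun u _ => ?_
  rw [sum_congr rfl fun i hi => by rw [(mem_filter.1 hi).2], ← sum_div, sum_boole, filter_filter]
  rfl

theorem SIPCW_add_FIPCW (t : ℝ) :
    SIPCW X D t + FIPCW X D t
      = 1 / (n : ℝ) * ∑ u ∈ times X, dN X D u / Kminus X D u := by
  unfold SIPCW FIPCW
  rw [← mul_add, ← sum_add_distrib, ← sum_failure_div_eq_sum_dN_div]
  congr 1
  refine sum_congr rfl fun i _ => ?_
  rw [← add_div, ← mul_add]
  by_cases h : X i ≤ t
  · simp [h, not_lt.2 h]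
  · simp [h, not_le.1 h]

theorem one_div_mul_sum_dN_div_Kminus (hn : 0 < n) :
    1 / (n : ℝ) * ∑ u ∈ times X, dN X D u / Kminus X D u = 1 - SPL X D (tau X) := by
  have hSPL : SPL X D (tau X) = ∏ v ∈ times X, (1 - dN X D v / Yat X v) := by
    rw [SPL, filter_true_of_mem fun v hv => le_tau hn hv]
  rw [hSPL, ← sum_one_sub_mul_prod_filter_lt, mul_sum]
  refine sum_congr rfl fun u hu => ?_
  rw [one_div_mul_dN_div_Kminus hn hu, sub_sub_cancel]
  rfl

theorem SPL_tau_eq_zero_iff (hn : 0 < n) :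
    SPL X D (tau X) = 0 ↔ dN X D (tau X) = Yat X (tau X) := by
  have hτ : tau X ∈ times X := tau_mem_times hn
  have hS := right_ne_zero_of_mul (Kminus_mul_SPLminus_ne_zero (D := D) hn hτ)
  rw [SPL, prod_filter_le_eq_mul_prod_filter_lt hτ, ← SPLminus, mul_eq_zero, or_iff_left hS,
    sub_eq_zero, eq_comm, div_eq_one_iff_eq (Yat_pos hτ).ne']

theorem stmt13_general (n : ℕ) (hn : 0 < n) (X : Fin n → ℝ) (D : Fin n → Bool) :
    (∀ t : ℝ, 0 ≤ t → SIPCW X D t = 1 - FIPCW X D t)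
      ↔ dN X D (tau X) = Yat X (tau X) := by
  have hsum (t : ℝ) : SIPCW X D t + FIPCW X D t = 1 - SPL X D (tau X) := by
    rw [SIPCW_add_FIPCW, one_div_mul_sum_dN_div_Kminus hn]
  rw [← SPL_tau_eq_zero_iff hn]
  exact ⟨fun h => by linarith [h 0 le_rfl, hsum 0], fun h t _ => by linarith [hsum t]⟩

/-- `S̃_IPCW(t) = 1 − F̂_IPCW(t)` for every `t ≥ 0` iff `ΔN(τ) = Y(τ)`. -/
theorem stmt13 (n : ℕ) (hn : 0 < n) (X : Fin n → ℝ) (D : Fin n → Bool)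
    (hX : ∀ i, 0 < X i) :
    (∀ t : ℝ, 0 ≤ t → SIPCW X D t = 1 - FIPCW X D t)
      ↔ dN X D (tau X) = Yat X (tau X) :=
  stmt13_general n hn X D

end SurvStmt
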